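/- arXiv:1608.00535 — 2 statements merged into one kernel-verified Lean document; each statement's English description precedes it below -/
import Mathlib

section
/- (Perron–Frobenius for regular stochastic matrices) If A is a regular m×m stochastic matrix with m ≥ 2, then there is a probability vector π such that for any initial probability vector π_0, the iterates π_0 Aⁿ converge to π as n → ∞, and π is the unique probability vector satisfying π A = π. -/
/-!
Subtracting `ε` from every entry of a matrix whose entries are all at least `ε` does not change
`w ᵥ* M` when `w` sums to zero, and leaves a nonnegative matrix with row sums `1 - card ι * ε`;
so such an `M` contracts the `ℓ¹` norm on zero-sum vectors by that factor (Dobrushin). For a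
regular stochastic `A` this applies to a positive power `A ^ k`, while `A` itself is
`ℓ¹`-nonexpansive on zero-sum vectors. Hence `p ᵥ* A ^ n - q ᵥ* A ^ n` decays geometrically,
uniformly in the probability vectors `p, q`: every orbit is Cauchy, all orbits share one limit
`π`, and a stationary vector, being its own orbit, must be `π`.
-/

open Finset Matrix

/-- A stochastic matrix: nonnegative entries with each row summing to 1. -/
def IsStochastic {m : ℕ} (A : Matrix (Fin m) (Fin m) ℝ) : Prop :=
  (∀ x y, 0 ≤ A x y) ∧ ∀ x, ∑ y, A x y = 1

/-- A probability (row) vector: nonnegative entries summing to 1. -/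
def IsProbVec {m : ℕ} (v : Fin m → ℝ) : Prop :=
  (∀ x, 0 ≤ v x) ∧ ∑ x, v x = 1

/-- The Google matrix G = g·A + (1-g)·K, where K has all entries 1/m. -/
noncomputable def googleMatrix {m : ℕ} (A : Matrix (Fin m) (Fin m) ℝ) (g : ℝ) :
    Matrix (Fin m) (Fin m) ℝ :=
  g • A + (1 - g) • Matrix.of (fun _ _ : Fin m => (1 : ℝ) / m)

open Filter Topology

section RowSums

variable {ι : Type*} [Fintype ι]

lemma sum_vecMul_of_sum_row_eq_one {M : Matrix ι ι ℝ} (hM : ∀ i, ∑ j, M i j = 1)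
    (v : ι → ℝ) : ∑ j, (v ᵥ* M) j = ∑ i, v i := by
  simp only [vecMul, dotProduct]
  rw [Finset.sum_comm]
  simp [← Finset.mul_sum, hM]

lemma card_mul_le_one_of_le_entries [Nonempty ι] {M : Matrix ι ι ℝ} {ε : ℝ}
    (hM : ∀ i, ∑ j, M i j = 1) (hε : ∀ i j, ε ≤ M i j) : Fintype.card ι * ε ≤ 1 := by
  obtain ⟨i⟩ := ‹Nonempty ι›
  calc Fintype.card ι * ε = ∑ _j : ι, ε := by simp
    _ ≤ ∑ j, M i j := Finset.sum_le_sum fun j _ => hε i j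
    _ = 1 := hM i

lemma sum_abs_vecMul_le_of_sum_eq_zero {M : Matrix ι ι ℝ} {ε : ℝ}
    (hM : ∀ i, ∑ j, M i j = 1) (hε : ∀ i j, ε ≤ M i j) {w : ι → ℝ} (hw : ∑ i, w i = 0) :
    ∑ j, |(w ᵥ* M) j| ≤ (1 - Fintype.card ι * ε) * ∑ i, |w i| := by
  have hshift : ∀ j, (w ᵥ* M) j = ∑ i, w i * (M i j - ε) := fun j => by
    simp only [vecMul, dotProduct, mul_sub, Finset.sum_sub_distrib, ← Finset.sum_mul, hw,
      zero_mul, sub_zero]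
  calc ∑ j, |(w ᵥ* M) j| ≤ ∑ j, ∑ i, |w i| * (M i j - ε) := by
        refine Finset.sum_le_sum fun j _ => ?_
        rw [hshift]
        refine (Finset.abs_sum_le_sum_abs _ _).trans_eq (Finset.sum_congr rfl fun i _ => ?_)
        rw [abs_mul, abs_of_nonneg (sub_nonneg.2 (hε i j))]
    _ = ∑ i, |w i| * ∑ j, (M i j - ε) := by
        rw [Finset.sum_comm]
        simp only [Finset.mul_sum]
    _ = (1 - Fintype.card ι * ε) * ∑ i, |w i| := by
        simp only [Finset.sum_sub_distrib, hM, Finset.sum_const, Finset.card_univ, nsmul_eq_mul,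
          Finset.mul_sum]
        exact Finset.sum_congr rfl fun i _ => mul_comm _ _

lemma dist_le_sum_abs_sub (v w : ι → ℝ) : dist v w ≤ ∑ i, |v i - w i| :=
  (dist_pi_le_iff (Finset.sum_nonneg fun i _ => abs_nonneg _)).2 fun j => by
    rw [Real.dist_eq]
    exact Finset.single_le_sum (f := fun i => |v i - w i|) (fun i _ => abs_nonneg _)
      (Finset.mem_univ j)

lemma sum_abs_sub_le_two {p q : ι → ℝ} (hp : p ∈ stdSimplex ℝ ι) (hq : q ∈ stdSimplex ℝ ι) :
    ∑ i, |p i - q i| ≤ 2 :=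
  calc ∑ i, |p i - q i| ≤ ∑ i, (p i + q i) := Finset.sum_le_sum fun i _ =>
        (abs_sub _ _).trans_eq (by rw [abs_of_nonneg (hp.1 i), abs_of_nonneg (hq.1 i)])
    _ = 2 := by rw [Finset.sum_add_distrib, hp.2, hq.2]; norm_num

end RowSums

section RowStochastic

variable {ι : Type*} [Fintype ι] [DecidableEq ι] {A : Matrix ι ι ℝ}

lemma vecMul_mem_stdSimplex (hA : A ∈ rowStochastic ℝ ι) {p : ι → ℝ}
    (hp : p ∈ stdSimplex ℝ ι) : p ᵥ* A ∈ stdSimplex ℝ ι :=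
  ⟨nonneg_vecMul_of_mem_rowStochastic hA hp.1,
    (sum_vecMul_of_sum_row_eq_one (sum_row_of_mem_rowStochastic hA) p).trans hp.2⟩

lemma vecMul_pow_eq_self {p : ι → ℝ} (hp : p ᵥ* A = p) (n : ℕ) : p ᵥ* A ^ n = p := by
  induction n with
  | zero => simp
  | succ n ih => rw [pow_succ, ← vecMul_vecMul, ih, hp]

lemma sum_abs_vecMul_le_of_mem_rowStochastic (hA : A ∈ rowStochastic ℝ ι) {w : ι → ℝ}
    (hw : ∑ i, w i = 0) : ∑ j, |(w ᵥ* A) j| ≤ ∑ i, |w i| := by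
  simpa using sum_abs_vecMul_le_of_sum_eq_zero (sum_row_of_mem_rowStochastic hA)
    (fun _ _ => nonneg_of_mem_rowStochastic hA) hw

lemma sum_abs_vecMul_pow_le [Nonempty ι] (hA : A ∈ rowStochastic ℝ ι) {k : ℕ} {ε : ℝ}
    (hε : ∀ i j, ε ≤ (A ^ k) i j) {w : ι → ℝ} (hw : ∑ i, w i = 0) (n : ℕ) :
    ∑ j, |(w ᵥ* A ^ n) j| ≤ (1 - Fintype.card ι * ε) ^ (n / k) * ∑ i, |w i| := by
  have hAk := pow_mem hA k
  set θ := 1 - Fintype.card ι * ε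
  have hθ : 0 ≤ θ :=
    sub_nonneg.2 (card_mul_le_one_of_le_entries (sum_row_of_mem_rowStochastic hAk) hε)
  have hsum : ∀ {M}, M ∈ rowStochastic ℝ ι → ∑ i, (w ᵥ* M) i = 0 := fun hM =>
    (sum_vecMul_of_sum_row_eq_one (sum_row_of_mem_rowStochastic hM) w).trans hw
  have hblocks : ∀ q, ∑ j, |(w ᵥ* (A ^ k) ^ q) j| ≤ θ ^ q * ∑ i, |w i| := by
    intro q
    induction q with
    | zero => simp
    | succ q ih =>
      calc ∑ j, |(w ᵥ* (A ^ k) ^ (q + 1)) j|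
          = ∑ j, |((w ᵥ* (A ^ k) ^ q) ᵥ* A ^ k) j| := by rw [pow_succ, vecMul_vecMul]
        _ ≤ θ * ∑ j, |(w ᵥ* (A ^ k) ^ q) j| :=
          sum_abs_vecMul_le_of_sum_eq_zero (sum_row_of_mem_rowStochastic hAk) hε
            (hsum (pow_mem hAk q))
        _ ≤ θ * (θ ^ q * ∑ i, |w i|) := mul_le_mul_of_nonneg_left ih hθ
        _ = θ ^ (q + 1) * ∑ i, |w i| := by ring
  calc ∑ j, |(w ᵥ* A ^ n) j| = ∑ j, |((w ᵥ* (A ^ k) ^ (n / k)) ᵥ* A ^ (n % k)) j| := by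
        rw [vecMul_vecMul, ← pow_mul, ← pow_add, Nat.div_add_mod]
    _ ≤ ∑ j, |(w ᵥ* (A ^ k) ^ (n / k)) j| :=
        sum_abs_vecMul_le_of_mem_rowStochastic (pow_mem hA _) (hsum (pow_mem hAk _))
    _ ≤ θ ^ (n / k) * ∑ i, |w i| := hblocks _

lemma exists_tendsto_vecMul_pow_of_dist_le [Nonempty ι] (hA : A ∈ rowStochastic ℝ ι)
    {r : ℕ → ℝ} (hr : Tendsto r atTop (𝓝 0))
    (hdist : ∀ p ∈ stdSimplex ℝ ι, ∀ q ∈ stdSimplex ℝ ι, ∀ n,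
      dist (p ᵥ* A ^ n) (q ᵥ* A ^ n) ≤ r n) :
    ∃ π ∈ stdSimplex ℝ ι, ∀ p ∈ stdSimplex ℝ ι, Tendsto (fun n => p ᵥ* A ^ n) atTop (𝓝 π) := by
  obtain ⟨i⟩ := ‹Nonempty ι›
  set u : ι → ℝ := Pi.single i 1
  have horbit : ∀ n, u ᵥ* A ^ n ∈ stdSimplex ℝ ι := fun n =>
    vecMul_mem_stdSimplex (pow_mem hA n) (single_mem_stdSimplex ℝ i)
  have hcauchy : CauchySeq fun n => u ᵥ* A ^ n := by
    refine cauchySeq_of_le_tendsto_0' r (fun n m hnm => ?_) hr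
    have hshift : u ᵥ* A ^ m = (u ᵥ* A ^ (m - n)) ᵥ* A ^ n := by
      rw [vecMul_vecMul, ← pow_add, Nat.sub_add_cancel hnm]
    rw [hshift]
    exact hdist u (single_mem_stdSimplex ℝ i) _ (horbit _) n
  obtain ⟨π, hπ⟩ := cauchySeq_tendsto_of_complete hcauchy
  refine ⟨π, (isClosed_stdSimplex ℝ ι).mem_of_tendsto hπ (.of_forall horbit), fun p hp => ?_⟩
  refine hπ.congr_dist (squeeze_zero (fun _ => dist_nonneg) (fun n => ?_) hr)
  exact hdist u (single_mem_stdSimplex ℝ i) p hp n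

lemma exists_tendsto_vecMul_pow_of_pos [Nonempty ι] (hA : A ∈ rowStochastic ℝ ι) {k : ℕ}
    (hk : k ≠ 0) (hpos : ∀ i j, 0 < (A ^ k) i j) :
    ∃ π ∈ stdSimplex ℝ ι, ∀ p ∈ stdSimplex ℝ ι, Tendsto (fun n => p ᵥ* A ^ n) atTop (𝓝 π) := by
  obtain ⟨⟨i₀, j₀⟩, hmin⟩ := Finite.exists_min fun x : ι × ι => (A ^ k) x.1 x.2
  set θ := 1 - Fintype.card ι * (A ^ k) i₀ j₀
  have hε : ∀ i j, (A ^ k) i₀ j₀ ≤ (A ^ k) i j := fun i j => hmin (i, j)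
  have hθ0 : 0 ≤ θ := sub_nonneg.2 <|
    card_mul_le_one_of_le_entries (sum_row_of_mem_rowStochastic (pow_mem hA k)) hε
  have hθ1 : θ < 1 := sub_lt_self _ (mul_pos (by simp [Fintype.card_pos]) (hpos i₀ j₀))
  refine exists_tendsto_vecMul_pow_of_dist_le hA (r := fun n => θ ^ (n / k) * 2) ?_ ?_
  · simpa using ((tendsto_pow_atTop_nhds_zero_of_lt_one hθ0 hθ1).comp
      (Nat.tendsto_div_const_atTop hk)).mul_const 2
  · intro p hp q hq n
    have hw : ∑ i, (p - q) i = 0 := by simp [Finset.sum_sub_distrib, hp.2, hq.2]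
    calc dist (p ᵥ* A ^ n) (q ᵥ* A ^ n) ≤ ∑ j, |((p - q) ᵥ* A ^ n) j| := by
          simpa [sub_vecMul] using dist_le_sum_abs_sub (p ᵥ* A ^ n) (q ᵥ* A ^ n)
      _ ≤ θ ^ (n / k) * ∑ i, |(p - q) i| := sum_abs_vecMul_pow_le hA hε hw n
      _ ≤ θ ^ (n / k) * 2 :=
          mul_le_mul_of_nonneg_left (sum_abs_sub_le_two hp hq) (pow_nonneg hθ0 _)

end RowStochastic

/-- Perron–Frobenius for regular stochastic matrices. -/
theorem perron_frobenius_regular {m : ℕ} (hm : 2 ≤ m) (A : Matrix (Fin m) (Fin m) ℝ)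
    (hA : IsStochastic A) (hreg : ∃ k : ℕ, ∀ x y, 0 < (A ^ k) x y) :
    ∃ π : Fin m → ℝ, IsProbVec π ∧
      (∀ π₀ : Fin m → ℝ, IsProbVec π₀ →
        Filter.Tendsto (fun n : ℕ => Matrix.vecMul π₀ (A ^ n)) Filter.atTop (nhds π)) ∧
      (∀ π' : Fin m → ℝ, IsProbVec π' ∧ Matrix.vecMul π' A = π' → π' = π) := by
  obtain ⟨k, hk⟩ := hreg
  have : Nonempty (Fin m) := ⟨⟨0, by omega⟩⟩
  have hk0 : k ≠ 0 := by
    rintro rfl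
    have h01 := hk ⟨0, by omega⟩ ⟨1, by omega⟩
    rw [pow_zero, one_apply_ne (by simp)] at h01
    exact h01.false
  -- `IsProbVec v` unfolds to `v ∈ stdSimplex ℝ (Fin m)`.
  obtain ⟨π, hπ, hlim⟩ :=
    exists_tendsto_vecMul_pow_of_pos (mem_rowStochastic_iff_sum.2 hA) hk0 hk
  refine ⟨π, hπ, hlim, fun π' ⟨hπ', hfix⟩ => tendsto_nhds_unique ?_ (hlim π' hπ')⟩
  simp [vecMul_pow_eq_self hfix]
end

section
/- For two probability vectors π_0, π_0' and the Google matrix G = gA + (1-g)K, the total variation distance contracts: ‖π_0 G - π_0' G‖_1 ≤ g · ‖π_0 - π_0'‖_1; consequently π_0 Gⁿ converges geometrically with rate g to the unique stationary distribution. -/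
open Finset Matrix

/-!
On vectors of total mass zero the teleportation part `(1 - g) K` acts as zero, because every
column of `K` is constant; so there `G` acts as `g A`. A stochastic `A` does not increase the
ℓ¹ norm and preserves total mass, hence `G` contracts zero-mass vectors by the factor `g` and
keeps them of zero mass. The difference of two probability vectors has zero mass, and so has
`π₀ Gⁿ - π = (π₀ - π) Gⁿ` for a stationary `π`.
-/

variable {m : ℕ} {A : Matrix (Fin m) (Fin m) ℝ}

namespace IsStochastic

theorem sum_vecMul (hA : IsStochastic A) (v : Fin m → ℝ) :
    ∑ x, vecMul v A x = ∑ y, v y := by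
  simp only [vecMul, dotProduct]
  rw [sum_comm]
  simp [← mul_sum, hA.2]

theorem sum_abs_vecMul_le (hA : IsStochastic A) (v : Fin m → ℝ) :
    ∑ x, |vecMul v A x| ≤ ∑ y, |v y| := by
  calc ∑ x, |vecMul v A x| ≤ ∑ x, vecMul (fun y => |v y|) A x := by
        refine sum_le_sum fun x _ => ?_
        simp only [vecMul, dotProduct]
        refine (abs_sum_le_sum_abs _ _).trans_eq ?_
        simp only [abs_mul, abs_of_nonneg (hA.1 _ x)]
    _ = ∑ y, |v y| := hA.sum_vecMul _

end IsStochastic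

theorem vecMul_googleMatrix_of_sum_eq_zero (g : ℝ) {d : Fin m → ℝ} (hd : ∑ y, d y = 0) :
    vecMul d (googleMatrix A g) = g • vecMul d A := by
  have hK : vecMul d (Matrix.of fun _ _ : Fin m => (1 : ℝ) / m) = 0 := by
    ext x
    simp [vecMul, dotProduct, ← sum_mul, hd]
  rw [googleMatrix, vecMul_add, vecMul_smul, vecMul_smul, hK, smul_zero, add_zero]

theorem sum_vecMul_googleMatrix_eq_zero (hA : IsStochastic A) (g : ℝ) {d : Fin m → ℝ}
    (hd : ∑ y, d y = 0) : ∑ x, vecMul d (googleMatrix A g) x = 0 := by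
  simp [vecMul_googleMatrix_of_sum_eq_zero g hd, ← mul_sum, hA.sum_vecMul, hd]

theorem sum_abs_vecMul_googleMatrix_le (hA : IsStochastic A) {g : ℝ} (hg : 0 ≤ g)
    {d : Fin m → ℝ} (hd : ∑ y, d y = 0) :
    ∑ x, |vecMul d (googleMatrix A g) x| ≤ g * ∑ y, |d y| := by
  simp only [vecMul_googleMatrix_of_sum_eq_zero g hd, Pi.smul_apply, smul_eq_mul, abs_mul,
    abs_of_nonneg hg, ← mul_sum]
  exact mul_le_mul_of_nonneg_left (hA.sum_abs_vecMul_le d) hg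

theorem sum_abs_vecMul_googleMatrix_pow_le (hA : IsStochastic A) {g : ℝ} (hg : 0 ≤ g)
    {d : Fin m → ℝ} (hd : ∑ y, d y = 0) (n : ℕ) :
    ∑ x, |vecMul d (googleMatrix A g ^ n) x| ≤ g ^ n * ∑ y, |d y| := by
  induction n generalizing d with
  | zero => simp
  | succ n ih =>
    rw [pow_succ', ← vecMul_vecMul]
    calc _ ≤ g ^ n * ∑ y, |vecMul d (googleMatrix A g) y| :=
          ih (sum_vecMul_googleMatrix_eq_zero hA g hd)
      _ ≤ g ^ n * (g * ∑ y, |d y|) :=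
          mul_le_mul_of_nonneg_left (sum_abs_vecMul_googleMatrix_le hA hg hd) (pow_nonneg hg n)
      _ = g ^ (n + 1) * ∑ y, |d y| := by ring

theorem vecMul_pow_of_vecMul_eq {ι R : Type*} [Fintype ι] [DecidableEq ι] [Semiring R]
    {M : Matrix ι ι R} {π : ι → R} (hπ : vecMul π M = π) (n : ℕ) : vecMul π (M ^ n) = π := by
  induction n with
  | zero => simp
  | succ n ih => rw [pow_succ, ← vecMul_vecMul, ih, hπ]

theorem IsProbVec.sum_sub_eq_zero {v w : Fin m → ℝ} (hv : IsProbVec v) (hw : IsProbVec w) :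
    ∑ x, (v - w) x = 0 := by
  simp [sum_sub_distrib, hv.2, hw.2]

theorem google_l1_contraction_general {m : ℕ} (A : Matrix (Fin m) (Fin m) ℝ)
    (hA : IsStochastic A) (g : ℝ) (hg0 : 0 ≤ g) :
    (∀ π₀ π₀' : Fin m → ℝ, IsProbVec π₀ → IsProbVec π₀' →
      ∑ x, |Matrix.vecMul π₀ (googleMatrix A g) x - Matrix.vecMul π₀' (googleMatrix A g) x|
        ≤ g * ∑ x, |π₀ x - π₀' x|) ∧
    (∀ π : Fin m → ℝ, IsProbVec π → Matrix.vecMul π (googleMatrix A g) = π →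
      ∀ π₀ : Fin m → ℝ, IsProbVec π₀ → ∀ n : ℕ,
        ∑ x, |Matrix.vecMul π₀ ((googleMatrix A g) ^ n) x - π x|
          ≤ g ^ n * ∑ x, |π₀ x - π x|) := by
  constructor
  · intro π₀ π₀' h₀ h₀'
    simpa [sub_vecMul] using sum_abs_vecMul_googleMatrix_le hA hg0 (h₀.sum_sub_eq_zero h₀')
  · intro π hπ hstat π₀ h₀ n
    have hdiff :
        vecMul π₀ (googleMatrix A g ^ n) - π = vecMul (π₀ - π) (googleMatrix A g ^ n) := by
      rw [sub_vecMul, vecMul_pow_of_vecMul_eq hstat]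
    simpa [← hdiff] using sum_abs_vecMul_googleMatrix_pow_le hA hg0 (h₀.sum_sub_eq_zero hπ) n

/-- the Google matrix contracts the total variation (ℓ¹) distance by
a factor g, hence iterates converge geometrically to the stationary distribution. -/
theorem google_l1_contraction {m : ℕ} (A : Matrix (Fin m) (Fin m) ℝ)
    (hA : IsStochastic A) (g : ℝ) (hg0 : 0 ≤ g) (hg1 : g < 1) :
    (∀ π₀ π₀' : Fin m → ℝ, IsProbVec π₀ → IsProbVec π₀' →
      ∑ x, |Matrix.vecMul π₀ (googleMatrix A g) x - Matrix.vecMul π₀' (googleMatrix A g) x|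
        ≤ g * ∑ x, |π₀ x - π₀' x|) ∧
    (∀ π : Fin m → ℝ, IsProbVec π → Matrix.vecMul π (googleMatrix A g) = π →
      ∀ π₀ : Fin m → ℝ, IsProbVec π₀ → ∀ n : ℕ,
        ∑ x, |Matrix.vecMul π₀ ((googleMatrix A g) ^ n) x - π x|
          ≤ g ^ n * ∑ x, |π₀ x - π x|) :=
  google_l1_contraction_general A hA g hg0
end
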